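/- arXiv:1205.5932 — 3 statements merged into one kernel-verified Lean document; each statement's English description precedes it below -/
import Mathlib

section
/- Let n = p_1^{α_1} · p_2^{α_2} ⋯ p_s^{α_s} be the canonical prime factorization of a positive integer n with primes p_1 < p_2 < ⋯ < p_s and each α_i ≥ 1. If s ≥ 3, or s = 2 and p_1 > 2, then 2^{s-1} · φ(n) > n, where φ is Euler's totient function. -/
lemma aux_prod_lt (n : ℕ) (p q : ℕ)
    (hp : p ∈ n.primeFactors.erase 2) (hq : q ∈ n.primeFactors.erase 2) (hpq : p < q) :
    2 * ∏ r ∈ n.primeFactors, r < ∏ r ∈ n.primeFactors, (2 * (r - 1)) := by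
  have hp2 : p ≠ 2 := Finset.ne_of_mem_erase hp
  have hq2 : q ≠ 2 := Finset.ne_of_mem_erase hq
  have hpF : p ∈ n.primeFactors := Finset.mem_of_mem_erase hp
  have hqF : q ∈ n.primeFactors := Finset.mem_of_mem_erase hq
  have hppr : p.Prime := Nat.prime_of_mem_primeFactors hpF
  have hqpr : q.Prime := Nat.prime_of_mem_primeFactors hqF
  have hp3 : 3 ≤ p := by have := hppr.two_le; omega
  have hq5 : 5 ≤ q := by
    have hodd : Odd q := hqpr.odd_of_ne_two hq2
    obtain ⟨k, hk⟩ := hodd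
    omega
  have hqF' : q ∈ n.primeFactors.erase p := Finset.mem_erase.mpr ⟨by omega, hqF⟩
  rw [← Finset.mul_prod_erase n.primeFactors _ hpF,
      ← Finset.mul_prod_erase _ _ hqF',
      ← Finset.mul_prod_erase n.primeFactors (fun r => 2 * (r - 1)) hpF,
      ← Finset.mul_prod_erase _ (fun r => 2 * (r - 1)) hqF']
  set R := (n.primeFactors.erase p).erase q with hR
  have hle : ∏ r ∈ R, r ≤ ∏ r ∈ R, (2 * (r - 1)) := by
    apply Finset.prod_le_prod'
    intro r hr
    have : r.Prime := Nat.prime_of_mem_primeFactors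
      (Finset.mem_of_mem_erase (Finset.mem_of_mem_erase hr))
    have := this.two_le
    omega
  have hpos : 0 < ∏ r ∈ R, (2 * (r - 1)) := by
    apply Finset.prod_pos
    intro r hr
    have : r.Prime := Nat.prime_of_mem_primeFactors
      (Finset.mem_of_mem_erase (Finset.mem_of_mem_erase hr))
    have := this.two_le
    omega
  calc 2 * (p * (q * ∏ r ∈ R, r)) = (2 * p * q) * ∏ r ∈ R, r := by ring
    _ ≤ (2 * p * q) * ∏ r ∈ R, (2 * (r - 1)) := Nat.mul_le_mul_left _ hle
    _ < (2 * (p - 1) * (2 * (q - 1))) * ∏ r ∈ R, (2 * (r - 1)) := by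
        apply (Nat.mul_lt_mul_right hpos).mpr
        have h1 : 1 ≤ p - 1 := by omega
        nlinarith [Nat.sub_add_cancel (by omega : 1 ≤ p), Nat.sub_add_cancel (by omega : 1 ≤ q)]
    _ = 2 * (p - 1) * (2 * (q - 1) * ∏ r ∈ R, (2 * (r - 1))) := by ring

/-- If `n` has `s` distinct prime factors and `s ≥ 3`, or `s = 2` and the smallest prime
factor of `n` is greater than `2` (i.e. `n` is odd), then `2^(s-1) * φ(n) > n`. -/
theorem stmt_0 (n : ℕ) (hn : 0 < n) (s : ℕ) (hs : s = n.primeFactors.card)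
    (h : 3 ≤ s ∨ (s = 2 ∧ ¬ 2 ∣ n)) :
    n < 2 ^ (s - 1) * n.totient := by
  have hc2 : 2 ≤ s := by rcases h with h | ⟨h, _⟩ <;> omega
  have hG : 2 ≤ (n.primeFactors.erase 2).card := by
    rcases h with h3 | ⟨h2, hd⟩
    · have := Finset.pred_card_le_card_erase (a := 2) (s := n.primeFactors)
      omega
    · rw [Finset.erase_eq_of_notMem]
      · omega
      · intro hmem
        exact hd (Nat.dvd_of_mem_primeFactors hmem)
  obtain ⟨p, hp, q, hq, hpq⟩ := Finset.one_lt_card.mp (by omega : 1 < (n.primeFactors.erase 2).card)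
  have key : 2 * ∏ r ∈ n.primeFactors, r < ∏ r ∈ n.primeFactors, (2 * (r - 1)) := by
    rcases hpq.lt_or_gt with hlt | hlt
    · exact aux_prod_lt n p q hp hq hlt
    · exact aux_prod_lt n q p hq hp hlt
  rw [Finset.prod_mul_distrib, Finset.prod_const, ← hs] at key
  -- key : 2 * ∏ r, r < 2 ^ s * ∏ r, (r - 1)
  have h1 := Nat.totient_mul_prod_primeFactors n
  -- φ n * ∏ r = n * ∏ (r-1)
  have hs1 : 2 ^ (s - 1) * 2 = 2 ^ s := by
    rw [← pow_succ]
    congr 1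
    omega
  apply Nat.lt_of_mul_lt_mul_right (a := 2 * ∏ r ∈ n.primeFactors, r)
  calc n * (2 * ∏ r ∈ n.primeFactors, r)
      < n * (2 ^ s * ∏ r ∈ n.primeFactors, (r - 1)) := by
        apply (Nat.mul_lt_mul_left hn).mpr
        exact key
    _ = 2 ^ s * (n * ∏ r ∈ n.primeFactors, (r - 1)) := by ring
    _ = 2 ^ s * (n.totient * ∏ r ∈ n.primeFactors, r) := by rw [h1]
    _ = 2 ^ (s - 1) * n.totient * (2 * ∏ r ∈ n.primeFactors, r) := by rw [← hs1]; ring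
end

section
/- Let R be a finite local ring with maximal ideal M of order m. The adjacency matrix of the unitary Cayley graph G_R has eigenvalues |R| − m (with multiplicity 1), −m (with multiplicity |R|/m − 1), and 0 (with multiplicity (|R|/m)(m − 1)). -/
open Polynomial

open Polynomial

/-- The unitary Cayley graph of a finite commutative ring `R`. -/
def unitaryCayley (R : Type*) [CommRing R] [Fintype R] [DecidableEq R] : SimpleGraph R where
  Adj x y := x ≠ y ∧ IsUnit (x - y)
  symm := by
    refine ⟨fun x y h => ?_⟩
    exact ⟨h.1.symm, by simpa using h.2.neg⟩
  loopless := ⟨fun x h => h.1 rfl⟩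

instance unitaryCayley.instDecidableRel (R : Type*) [CommRing R] [Fintype R] [DecidableEq R] :
    DecidableRel (unitaryCayley R).Adj := fun a b =>
  decidable_of_iff (a ≠ b ∧ ∃ c, (a - b) * c = 1)
    (and_congr Iff.rfl isUnit_iff_exists_inv.symm)

/-- An `r`-regular graph is Ramanujan if every adjacency eigenvalue other than `±r`
has absolute value at most `2 * sqrt (r - 1)`. -/
def IsRamanujan {V : Type*} [Fintype V] [DecidableEq V] (G : SimpleGraph V)
    [DecidableRel G.Adj] (r : ℕ) : Prop :=
  ∀ μ ∈ (SimpleGraph.adjMatrix ℝ G).charpoly.roots,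
    |μ| ≠ (r : ℝ) → |μ| ≤ 2 * Real.sqrt ((r : ℝ) - 1)

/-- The energy of a graph: the sum of absolute values of its adjacency eigenvalues. -/
noncomputable def graphEnergy {V : Type*} [Fintype V] [DecidableEq V] (G : SimpleGraph V)
    [DecidableRel G.Adj] : ℝ :=
  ((SimpleGraph.adjMatrix ℝ G).charpoly.roots.map (fun μ => |μ|)).sum

/-! In a local ring the non-units are exactly `M`, so `x, y` are adjacent iff `x - y ∉ M`, and the
adjacency matrix is `A = J - B` with `J` the all-ones matrix and `B` the indicator of `x - y ∈ M`.
With `n = |R|`, counting cosets gives `J² = nJ`, `JB = BJ = mJ` and `B² = mB`, hence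
`A² + mA = (n - m)J` and `JA = (n - m)J`. So `A (A + m) (A - (n - m)) = 0`, and the eigenvalues
of the symmetric matrix `A` lie in `{n - m, -m, 0}`. Their multiplicities `c, b, a` are forced by
`tr A = 0` and `tr A² = n (n - m)`: `c (n - m) = b m` and `c (n - m)² + b m² = n (n - m)` give
`c = 1` and `(b + 1) m = n`. -/

open Matrix Finset

section SameCoset

variable {G : Type*} [AddGroup G] [Fintype G] (H : AddSubgroup G) [DecidablePred (· ∈ H)]

theorem AddSubgroup.card_filter_sub_mem (x : G) : #{y | x - y ∈ H} = Nat.card H := by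
  rw [← Fintype.card_subtype, ← Nat.card_eq_fintype_card]
  exact Nat.card_congr ((Equiv.subLeft x).subtypeEquiv fun _ ↦ Iff.rfl)

variable (α : Type*) [NonAssocSemiring α]

def sameCosetMatrix : Matrix G G α := of fun x y ↦ if x - y ∈ H then 1 else 0

variable {α}

theorem sameCosetMatrix_mul_self :
    sameCosetMatrix H α * sameCosetMatrix H α = (Nat.card H : α) • sameCosetMatrix H α := by
  ext x y
  have hmem (z : G) : (z - y ∈ H ∧ x - z ∈ H) ↔ (x - y ∈ H ∧ x - z ∈ H) := by
    rw [and_congr_left_iff]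
    intro hxz
    rw [← H.add_mem_cancel_left hxz, sub_add_sub_cancel]
  simp only [sameCosetMatrix, mul_apply, of_apply, Matrix.smul_apply, mul_ite, mul_one, mul_zero,
    ← ite_and]
  simp_rw [hmem, ite_and]
  split_ifs <;> simp [sum_boole, H.card_filter_sub_mem]

theorem sameCosetMatrix_mul_ones :
    sameCosetMatrix H α * of (fun _ _ ↦ 1) = (Nat.card H : α) • of (fun _ _ ↦ 1) := by
  ext x y
  simp [sameCosetMatrix, mul_apply, sum_boole, H.card_filter_sub_mem]

theorem ones_mul_sameCosetMatrix :
    of (fun _ _ ↦ 1) * sameCosetMatrix H α = (Nat.card H : α) • of (fun _ _ ↦ 1) := by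
  ext x y
  simp [sameCosetMatrix, mul_apply, sum_boole, H.sub_mem_comm_iff, H.card_filter_sub_mem]

end SameCoset

theorem Matrix.ones_mul_ones {n α : Type*} [Fintype n] [NonAssocSemiring α] :
    (of fun _ _ ↦ 1 : Matrix n n α) * of (fun _ _ ↦ 1) =
      (Fintype.card n : α) • of fun _ _ ↦ 1 := by
  ext x y
  simp [mul_apply]

namespace Matrix.IsHermitian

variable {n 𝕜 : Type*} [Fintype n] [DecidableEq n] [RCLike 𝕜] {A : Matrix n n 𝕜}

theorem trace_pow_eq_sum_eigenvalues_pow (hA : A.IsHermitian) (k : ℕ) :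
    (A ^ k).trace = ∑ i, (hA.eigenvalues i : 𝕜) ^ k := by
  conv_lhs => rw [hA.spectral_theorem, ← map_pow, Unitary.conjStarAlgAut_apply, trace_mul_cycle,
    Unitary.coe_star_mul_self, one_mul, diagonal_pow, trace_diagonal]
  rfl

theorem eval_eigenvalues_eq_zero_of_aeval_eq_zero (hA : A.IsHermitian) {p : Polynomial ℝ}
    (hp : Polynomial.aeval A p = 0) (i : n) : p.eval (hA.eigenvalues i) = 0 := by
  have : Nonempty n := ⟨i⟩
  simpa [hp] using
    spectrum.subset_polynomial_aeval A p ⟨_, hA.eigenvalues_mem_spectrum_real i, rfl⟩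

end Matrix.IsHermitian

theorem Ideal.card_lt_card_of_ne_top {R : Type*} [Ring R] [Finite R] {I : Ideal R}
    (hI : I ≠ ⊤) :
    Nat.card I < Nat.card R := by
  refine I.toAddSubgroup.card_le_card_addGroup.lt_of_ne fun h ↦ hI ?_
  rw [← Submodule.toAddSubgroup_inj, Submodule.top_toAddSubgroup]
  exact (AddSubgroup.card_eq_iff_eq_top _).mp h

section LocalRing

open IsLocalRing

variable {R : Type*} [CommRing R] [IsLocalRing R] [Fintype R] [DecidableEq R]

theorem unitaryCayley_adj_iff {x y : R} :
    (unitaryCayley R).Adj x y ↔ x - y ∉ maximalIdeal R := by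
  rw [mem_maximalIdeal, mem_nonunits_iff, not_not]
  exact ⟨And.right, fun h ↦ ⟨fun hxy ↦ by simp [hxy] at h, h⟩⟩

variable (α : Type*) [CommRing α]

theorem adjMatrix_unitaryCayley [DecidablePred (· ∈ (maximalIdeal R).toAddSubgroup)] :
    (unitaryCayley R).adjMatrix α =
      of (fun _ _ ↦ 1) - sameCosetMatrix (maximalIdeal R).toAddSubgroup α := by
  ext x y
  simp only [SimpleGraph.adjMatrix_apply, unitaryCayley_adj_iff, sameCosetMatrix,
    Matrix.sub_apply, of_apply, Submodule.mem_toAddSubgroup]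
  split_ifs <;> simp

theorem adjMatrix_unitaryCayley_mul_self :
    (unitaryCayley R).adjMatrix α * (unitaryCayley R).adjMatrix α +
        (Nat.card (maximalIdeal R) : α) • (unitaryCayley R).adjMatrix α =
      ((Fintype.card R : α) - Nat.card (maximalIdeal R)) • of (fun _ _ ↦ 1) := by
  classical
  rw [adjMatrix_unitaryCayley, sub_mul, mul_sub, mul_sub, ones_mul_ones, sameCosetMatrix_mul_ones,
    ones_mul_sameCosetMatrix, sameCosetMatrix_mul_self]
  change _ + ((Nat.card (maximalIdeal R).toAddSubgroup : α)) • _ = _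
  module

theorem ones_mul_adjMatrix_unitaryCayley :
    of (fun _ _ ↦ 1) * (unitaryCayley R).adjMatrix α =
      ((Fintype.card R : α) - Nat.card (maximalIdeal R)) • of (fun _ _ ↦ 1) := by
  classical
  rw [adjMatrix_unitaryCayley, mul_sub, ones_mul_ones, ones_mul_sameCosetMatrix]
  change _ = (_ - ((Nat.card (maximalIdeal R).toAddSubgroup : α))) • _
  module

theorem aeval_adjMatrix_unitaryCayley :
    aeval ((unitaryCayley R).adjMatrix α)
      (X * (X + C (Nat.card (maximalIdeal R) : α)) *
        (X - C ((Fintype.card R : α) - Nat.card (maximalIdeal R)))) = 0 := by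
  set A := (unitaryCayley R).adjMatrix α
  set m : α := ((Nat.card (maximalIdeal R) : ℕ) : α)
  set r : α := (Fintype.card R : α) - m
  simp only [map_mul, map_add, map_sub, aeval_X, aeval_C, Algebra.algebraMap_eq_smul_one]
  calc A * (A + m • 1) * (A - r • 1) = (A * A + m • A) * (A - r • 1) := by
        rw [mul_add, mul_smul_comm, mul_one]
    _ = r • (of (fun _ _ ↦ 1) * A - r • of (fun _ _ ↦ 1)) := by
        rw [adjMatrix_unitaryCayley_mul_self, smul_mul_assoc, mul_sub, mul_smul_comm, mul_one]
    _ = 0 := by rw [ones_mul_adjMatrix_unitaryCayley, sub_self, smul_zero]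

theorem trace_adjMatrix_unitaryCayley_sq :
    ((unitaryCayley R).adjMatrix α ^ 2).trace =
      Fintype.card R * ((Fintype.card R : α) - Nat.card (maximalIdeal R)) := by
  rw [sq, eq_sub_of_add_eq (adjMatrix_unitaryCayley_mul_self α), trace_sub, trace_smul,
    trace_smul, SimpleGraph.trace_adjMatrix]
  simp [trace, mul_comm]

theorem eigenvalues_adjMatrix_unitaryCayley_mem
    (hA : ((unitaryCayley R).adjMatrix ℝ).IsHermitian) (i : R) :
    hA.eigenvalues i ∈ ({(Fintype.card R : ℝ) - Nat.card (maximalIdeal R),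
      -(Nat.card (maximalIdeal R) : ℝ), 0} : Finset ℝ) := by
  have := hA.eval_eigenvalues_eq_zero_of_aeval_eq_zero (aeval_adjMatrix_unitaryCayley ℝ) i
  simp only [eval_mul, eval_add, eval_sub, eval_X, eval_C, mul_eq_zero, sub_eq_zero,
    add_eq_zero_iff_eq_neg] at this
  simp only [Finset.mem_insert, Finset.mem_singleton]
  tauto

theorem sum_sq_eigenvalues_adjMatrix_unitaryCayley
    (hA : ((unitaryCayley R).adjMatrix ℝ).IsHermitian) :
    ∑ i, hA.eigenvalues i ^ 2 =
      Fintype.card R * ((Fintype.card R : ℝ) - Nat.card (maximalIdeal R)) := by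
  simpa using (hA.trace_pow_eq_sum_eigenvalues_pow 2).symm.trans
    (trace_adjMatrix_unitaryCayley_sq ℝ)

end LocalRing

theorem SimpleGraph.sum_eigenvalues_adjMatrix {V : Type*} [Fintype V] [DecidableEq V]
    (G : SimpleGraph V) [DecidableRel G.Adj] (hA : (G.adjMatrix ℝ).IsHermitian) :
    ∑ i, hA.eigenvalues i = 0 := by
  simpa using hA.trace_eq_sum_eigenvalues.symm.trans (G.trace_adjMatrix ℝ)

open Finset in
@[to_additive]
theorem Fintype.prod_comp_of_forall_mem_triple {ι β M : Type*} [Fintype ι] [DecidableEq β]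
    [CommMonoid M] {g : ι → β} {a b c : β} (hab : a ≠ b) (hac : a ≠ c) (hbc : b ≠ c)
    (hg : ∀ i, g i ∈ ({a, b, c} : Finset β)) (f : β → M) :
    ∏ i, f (g i) = f a ^ #{i | g i = a} * f b ^ #{i | g i = b} * f c ^ #{i | g i = c} := by
  rw [← prod_fiberwise_of_maps_to' (fun i _ ↦ hg i), prod_insert (by simp [hab, hac]),
    prod_insert (by simpa using hbc), prod_singleton, ← mul_assoc]
  simp only [prod_const]

theorem eigenvalue_multiplicities_of_traces {n m c b a : ℕ} (hm : 0 < m) (hmn : m < n)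
    (hcard : c + b + a = n) (htr : (c : ℝ) * (n - m) = b * m)
    (htr_sq : (c : ℝ) * (n - m) ^ 2 + b * m ^ 2 = n * (n - m)) :
    c = 1 ∧ b = n / m - 1 ∧ a = n / m * (m - 1) := by
  have hr : (0 : ℝ) < n - m := by rw [sub_pos]; exact_mod_cast hmn
  have hc : c = 1 := by
    have : (c : ℝ) * (n - m) * n = 1 * (n - m) * n := by linear_combination htr_sq + m * htr
    have hn : (n : ℝ) ≠ 0 := Nat.cast_ne_zero.mpr (by omega)
    exact_mod_cast mul_right_cancel₀ hr.ne' (mul_right_cancel₀ hn this)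
  subst hc
  have hn : (b + 1) * m = n := by
    have : (b + 1 : ℝ) * m = n := by linear_combination -htr
    exact_mod_cast this
  subst hn
  rw [Nat.mul_div_cancel _ hm]
  obtain ⟨k, rfl⟩ := Nat.exists_eq_add_of_lt hm
  refine ⟨rfl, by omega, ?_⟩
  simp only [zero_add, add_tsub_cancel_right]
  linarith

theorem prod_X_sub_C_eq_of_sum_eq_zero_of_sum_sq_eq {ι : Type*} [Fintype ι] {μ : ι → ℝ}
    {m : ℕ} (hm : 0 < m) (hmn : m < Fintype.card ι)
    (hμ : ∀ i, μ i ∈ ({(Fintype.card ι : ℝ) - m, -(m : ℝ), 0} : Finset ℝ))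
    (hsum : ∑ i, μ i = 0)
    (hsum_sq : ∑ i, μ i ^ 2 = Fintype.card ι * ((Fintype.card ι : ℝ) - m)) :
    ∏ i, (X - C (μ i)) = (X - C ((Fintype.card ι : ℝ) - m)) * (X + C (m : ℝ)) ^
      (Fintype.card ι / m - 1) * X ^ (Fintype.card ι / m * (m - 1)) := by
  set n := Fintype.card ι
  have hr : (0 : ℝ) < n - m := by rw [sub_pos]; exact_mod_cast hmn
  have hr_ne_neg : (n : ℝ) - m ≠ -m := by linarith
  have hm_neg_ne : -(m : ℝ) ≠ 0 := by simp [hm.ne']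
  have hcomp {M : Type} [AddCommMonoid M] (f : ℝ → M) :=
    Fintype.sum_comp_of_forall_mem_triple hr_ne_neg hr.ne' hm_neg_ne hμ f
  have hcard := hcomp fun _ ↦ (1 : ℕ)
  have hsum₁ := hcomp id
  have hsum₂ := hcomp fun x ↦ x ^ 2
  simp only [sum_const, card_univ, smul_eq_mul, mul_one, id_eq, nsmul_eq_mul, smul_neg, mul_zero,
    add_zero, even_two, Even.neg_pow, ne_eq, OfNat.ofNat_ne_zero, not_false_eq_true,
    zero_pow] at hcard hsum₁ hsum₂
  obtain ⟨hc, hb, ha⟩ := eigenvalue_multiplicities_of_traces hm hmn hcard.symm (by linarith)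
    (hsum₂.symm.trans hsum_sq)
  rw [Fintype.prod_comp_of_forall_mem_triple hr_ne_neg hr.ne' hm_neg_ne hμ (fun x ↦ X - C x), hc,
    hb, ha]
  simp

/-- For a finite local ring `R` with maximal ideal `M` of order `m`, the characteristic
polynomial of the adjacency matrix of `G_R` is
`(X - (|R| - m)) * (X + m)^(|R|/m - 1) * X^((|R|/m)(m-1))`, i.e. the eigenvalues are
`|R| - m` (multiplicity 1), `-m` (multiplicity `|R|/m - 1`) and `0`
(multiplicity `(|R|/m)(m-1)`). -/
theorem stmt_6 (R : Type*) [CommRing R] [IsLocalRing R] [Fintype R] [DecidableEq R]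
    (M : Ideal R) (hM : M.IsMaximal) (m : ℕ) (hm : m = Nat.card M) :
    (SimpleGraph.adjMatrix ℝ (unitaryCayley R)).charpoly =
      (X - C ((Fintype.card R : ℝ) - m)) * (X + C (m : ℝ)) ^ (Fintype.card R / m - 1) *
        X ^ ((Fintype.card R / m) * (m - 1)) := by
  obtain rfl := IsLocalRing.eq_maximalIdeal hM
  subst hm
  have hA := (unitaryCayley R).isHermitian_adjMatrix ℝ
  have hmn := Ideal.card_lt_card_of_ne_top hM.ne_top
  rw [Nat.card_eq_fintype_card (α := R)] at hmn
  rw [hA.charpoly_eq]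
  simpa using prod_X_sub_C_eq_of_sum_eq_zero_of_sum_sq_eq Nat.card_pos hmn
    (eigenvalues_adjMatrix_unitaryCayley_mem hA) ((unitaryCayley R).sum_eigenvalues_adjMatrix hA)
    (sum_sq_eigenvalues_adjMatrix_unitaryCayley hA)
end

section
/- Let p be an odd prime and α ≥ 1. The unitary Cayley graph of Z/p^α Z is Ramanujan if and only if α = 1 or α = 2. -/
open Polynomial

open Polynomial

/-!
Reduction mod `p` identifies `unitaryCayley (ZMod (p ^ α))` with the complete `p`-partite graph
whose parts are the fibres of `ZMod (p ^ α) → ZMod p`, each of size `m = p ^ (α - 1)`. Its adjacency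
matrix is `J - C`, with `J` the all-ones matrix and `C` the indicator of lying in the same part;
the relations `J² = p m J`, `J C = C J = m J`, `C² = m C` show that `X (X + m) (X - φ(p ^ α))`
annihilates it, so its only eigenvalues are `0`, `φ(p ^ α)` and `-m`, the last one realised by any
vector that is constant on parts and has zero sum. Hence the graph is Ramanujan iff
`m ≤ 2 √(φ(p ^ α) - 1)`, i.e. `m² + 4 ≤ 4 (p - 1) m`, which holds for `m ∈ {1, p}` and fails for
`m ≥ p²` once `p ≥ 3`.
-/

open Finset Matrix

namespace Matrix
variable {n K : Type*} [Fintype n] [DecidableEq n] [Field K]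

theorem eval_eq_zero_of_aeval_eq_zero_of_mem_roots_charpoly {A : Matrix n n K} {q : K[X]}
    (hq : aeval A q = 0) {μ : K} (hμ : μ ∈ A.charpoly.roots) : q.eval μ = 0 := by
  have hspec : μ ∈ spectrum K A :=
    mem_spectrum_iff_isRoot_charpoly.2 (isRoot_of_mem_roots hμ)
  have hq0 : q.eval μ ∈ spectrum K (0 : Matrix n n K) :=
    hq ▸ spectrum.subset_polynomial_aeval A q ⟨μ, hspec, rfl⟩
  by_contra hne
  rw [spectrum.mem_iff, sub_zero] at hq0
  exact hq0 ((IsUnit.mk0 _ hne).map (algebraMap K _))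

theorem mem_roots_charpoly_of_mulVec_eq_smul {A : Matrix n n K} {μ : K} {v : n → K}
    (hv : v ≠ 0) (hAv : A *ᵥ v = μ • v) : μ ∈ A.charpoly.roots := by
  rw [mem_roots A.charpoly_monic.ne_zero, ← mem_spectrum_iff_isRoot_charpoly,
    ← spectrum_toLin', ← Module.End.hasEigenvalue_iff_mem_spectrum]
  exact Module.End.hasEigenvalue_of_hasEigenvector ⟨Module.End.mem_eigenspace_iff.2 hAv, hv⟩

end Matrix

theorem sub_mul_add_smul_mul_sub_smul_eq_zero {K R : Type*} [CommRing K] [Ring R] [Algebra K R]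
    {J C : R} {n m : K} (hJJ : J * J = n • J) (hJC : J * C = m • J) (hCJ : C * J = m • J)
    (hCC : C * C = m • C) :
    (J - C) * ((J - C) + m • 1) * ((J - C) - (n - m) • 1) = 0 := by
  have h1 : (J - C) * ((J - C) + m • 1) = (n - m) • J := by
    rw [mul_add, sub_mul, mul_sub, mul_sub, hJJ, hJC, hCJ, hCC, mul_smul_comm, mul_one]
    module
  rw [h1, smul_mul_assoc, mul_sub, mul_sub, hJJ, hJC, mul_smul_comm, mul_one]
  module

section CompleteMultipartite

variable {V W : Type*} [DecidableEq W]

variable (V) in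
def allOnesMatrix : Matrix V V ℝ := of fun _ _ => 1

def sameFiberMatrix (f : V → W) : Matrix V V ℝ := of fun x y => if f x = f y then 1 else 0

theorem adjMatrix_eq_allOnesMatrix_sub_sameFiberMatrix {G : SimpleGraph V} [DecidableRel G.Adj]
    {f : V → W} (hG : ∀ x y, G.Adj x y ↔ f x ≠ f y) :
    G.adjMatrix ℝ = allOnesMatrix V - sameFiberMatrix f := by
  ext x y
  by_cases h : f x = f y <;> simp [allOnesMatrix, sameFiberMatrix, hG, h]

variable [Fintype V] [Fintype W] {f : V → W} {m : ℕ}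

theorem sum_comp_of_card_fiber {M : Type*} [AddCommMonoid M] (hf : ∀ w, #{x | f x = w} = m)
    (g : W → M) : ∑ x, g (f x) = m • ∑ w, g w := by
  rw [← sum_fiberwise univ f (fun x => g (f x)), smul_sum]
  refine sum_congr rfl fun w _ => ?_
  rw [sum_congr rfl fun x hx => by rw [(mem_filter.1 hx).2], sum_const, hf]

theorem card_eq_card_mul_of_card_fiber (hf : ∀ w, #{x | f x = w} = m) :
    Fintype.card V = Fintype.card W * m := by
  simpa [mul_comm] using sum_comp_of_card_fiber hf fun _ => (1 : ℕ)

theorem allOnesMatrix_mul_self :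
    allOnesMatrix V * allOnesMatrix V = (Fintype.card V : ℝ) • allOnesMatrix V := by
  ext x z
  simp [allOnesMatrix, mul_apply]

theorem allOnesMatrix_mul_sameFiberMatrix (hf : ∀ w, #{x | f x = w} = m) :
    allOnesMatrix V * sameFiberMatrix f = (m : ℝ) • allOnesMatrix V := by
  ext x z
  simpa [allOnesMatrix, sameFiberMatrix, mul_apply, eq_comm] using
    sum_comp_of_card_fiber hf fun w => if w = f z then (1 : ℝ) else 0

theorem sameFiberMatrix_mul_allOnesMatrix (hf : ∀ w, #{x | f x = w} = m) :
    sameFiberMatrix f * allOnesMatrix V = (m : ℝ) • allOnesMatrix V := by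
  ext x z
  simpa [allOnesMatrix, sameFiberMatrix, mul_apply] using
    sum_comp_of_card_fiber hf fun w => if f x = w then (1 : ℝ) else 0

theorem sameFiberMatrix_mul_self (hf : ∀ w, #{x | f x = w} = m) :
    sameFiberMatrix f * sameFiberMatrix f = (m : ℝ) • sameFiberMatrix f := by
  ext x z
  simpa [sameFiberMatrix, mul_apply, ite_and] using
    sum_comp_of_card_fiber hf fun w => if w = f z ∧ f x = w then (1 : ℝ) else 0

theorem mulVec_comp_eq_neg_smul (hf : ∀ w, #{x | f x = w} = m) {g : W → ℝ}
    (hg : ∑ w, g w = 0) :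
    (allOnesMatrix V - sameFiberMatrix f) *ᵥ (g ∘ f) = -(m : ℝ) • (g ∘ f) := by
  ext x
  have hJ : (allOnesMatrix V *ᵥ (g ∘ f)) x = 0 := by
    simp [allOnesMatrix, mulVec, dotProduct, sum_comp_of_card_fiber hf g, hg]
  have hC : (sameFiberMatrix f *ᵥ (g ∘ f)) x = m * g (f x) := by
    simpa [sameFiberMatrix, mulVec, dotProduct] using
      sum_comp_of_card_fiber hf fun w => if f x = w then g w else 0
  simp [sub_mulVec, hJ, hC]

variable [DecidableEq V] {G : SimpleGraph V} [DecidableRel G.Adj]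

theorem neg_mem_roots_charpoly_adjMatrix [Nontrivial W] (hG : ∀ x y, G.Adj x y ↔ f x ≠ f y)
    (hf : ∀ w, #{x | f x = w} = m) (hm : 0 < m) : -(m : ℝ) ∈ (G.adjMatrix ℝ).charpoly.roots := by
  obtain ⟨w₀, w₁, hw⟩ := exists_pair_ne W
  obtain ⟨x₀, hx₀⟩ := card_pos.1 ((hf w₀).symm ▸ hm)
  rw [mem_filter] at hx₀
  set g : W → ℝ := Pi.single w₀ 1 - Pi.single w₁ 1
  refine mem_roots_charpoly_of_mulVec_eq_smul (v := g ∘ f) (fun hv => ?_) ?_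
  · simpa [g, hx₀.2, hw] using congrFun hv x₀
  · rw [adjMatrix_eq_allOnesMatrix_sub_sameFiberMatrix hG]
    exact mulVec_comp_eq_neg_smul hf (by simp [g])

theorem mem_roots_charpoly_adjMatrix (hG : ∀ x y, G.Adj x y ↔ f x ≠ f y)
    (hf : ∀ w, #{x | f x = w} = m) {μ : ℝ} (hμ : μ ∈ (G.adjMatrix ℝ).charpoly.roots) :
    μ = 0 ∨ μ = -m ∨ μ = Fintype.card V - m := by
  have hA := sub_mul_add_smul_mul_sub_smul_eq_zero allOnesMatrix_mul_self
    (allOnesMatrix_mul_sameFiberMatrix hf) (sameFiberMatrix_mul_allOnesMatrix hf)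
    (sameFiberMatrix_mul_self hf)
  rw [← adjMatrix_eq_allOnesMatrix_sub_sameFiberMatrix hG] at hA
  have hq : aeval (G.adjMatrix ℝ) (X * (X + C (m : ℝ)) * (X - C (Fintype.card V - m : ℝ))) = 0 := by
    simpa [Algebra.smul_def] using hA
  have := eval_eq_zero_of_aeval_eq_zero_of_mem_roots_charpoly hq hμ
  simp only [eval_mul, eval_add, eval_sub, eval_X, eval_C, mul_eq_zero] at this
  rcases this with (h | h) | h
  · exact Or.inl h
  · exact Or.inr (Or.inl (eq_neg_of_add_eq_zero_left h))
  · exact Or.inr (Or.inr (sub_eq_zero.1 h))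

theorem Real.le_two_mul_sqrt_iff {a y : ℝ} (ha : 0 ≤ a) (hy : 0 ≤ y) :
    a ≤ 2 * √y ↔ a ^ 2 ≤ 4 * y := by
  rw [show 2 * √y = √(4 * y) by rw [Real.sqrt_mul zero_le_four, show (4 : ℝ) = 2 ^ 2 by norm_num,
    Real.sqrt_sq zero_le_two], Real.le_sqrt ha (by positivity)]

theorem isRamanujan_iff_of_adj_iff (hG : ∀ x y, G.Adj x y ↔ f x ≠ f y)
    (hf : ∀ w, #{x | f x = w} = m) (hm : 0 < m) (hW : 3 ≤ Fintype.card W) :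
    IsRamanujan G (Fintype.card V - m) ↔ m ^ 2 + 4 ≤ 4 * (Fintype.card V - m) := by
  have hV := card_eq_card_mul_of_card_fiber hf
  have hmV : 3 * m ≤ Fintype.card V := hV ▸ Nat.mul_le_mul_right m hW
  have hr : ((Fintype.card V - m : ℕ) : ℝ) = Fintype.card V - m := Nat.cast_sub (by omega)
  have hmV' : (3 * m : ℝ) ≤ Fintype.card V := by exact_mod_cast hmV
  have hm' : (1 : ℝ) ≤ m := by exact_mod_cast hm
  have hbound : (m : ℝ) ≤ 2 * √((Fintype.card V - m : ℕ) - 1) ↔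
      m ^ 2 + 4 ≤ 4 * (Fintype.card V - m) := by
    rw [Real.le_two_mul_sqrt_iff (Nat.cast_nonneg m) (by rw [hr]; linarith), ← Nat.cast_le (α := ℝ),
      hr]
    push_cast [Nat.cast_sub (by omega : m ≤ Fintype.card V)]
    constructor <;> intro h <;> linarith
  have : Nontrivial W := Fintype.one_lt_card_iff_nontrivial.1 (by omega)
  rw [← hbound]
  constructor
  · intro hRam
    have := hRam _ (neg_mem_roots_charpoly_adjMatrix hG hf hm)
      (by rw [abs_neg, Nat.abs_cast, hr]; linarith)
    rwa [abs_neg, Nat.abs_cast] at this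
  · intro hle μ hμ hne
    rcases mem_roots_charpoly_adjMatrix hG hf hμ with rfl | rfl | rfl
    · simp only [abs_zero]; positivity
    · rwa [abs_neg, Nat.abs_cast]
    · exact absurd (by rw [hr, abs_of_nonneg (by linarith)]) hne

end CompleteMultipartite

theorem ZMod.isUnit_iff_castHom_ne_zero {p α : ℕ} [NeZero (p ^ α)] (hp : p.Prime) (hα : α ≠ 0)
    (z : ZMod (p ^ α)) : IsUnit z ↔ ZMod.castHom (dvd_pow_self p hα) (ZMod p) z ≠ 0 := by
  rw [← ZMod.natCast_zmod_val z, isUnit_natCast_iff_not_dvd_pow hp (Nat.pos_of_ne_zero hα),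
    map_natCast, Ne, ZMod.natCast_eq_zero_iff]

theorem ZMod.card_castHom_fiber {p α : ℕ} [NeZero (p ^ α)] (hp : p.Prime) (hα : α ≠ 0)
    (t : ZMod p) : #{x : ZMod (p ^ α) | ZMod.castHom (dvd_pow_self p hα) (ZMod p) x = t} =
      p ^ (α - 1) := by
  have : NeZero p := ⟨hp.ne_zero⟩
  set π := ZMod.castHom (dvd_pow_self p hα) (ZMod p)
  have hfiber (s : ZMod p) : #{x | π x = s} = #{x | π x = t} :=
    AddMonoidHom.card_fiber_eq_of_mem_range π (ZMod.castHom_surjective _ s)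
      (ZMod.castHom_surjective _ t)
  have hsum := card_eq_sum_card_fiberwise (f := π) (s := univ) (t := univ) fun _ _ => mem_univ _
  rw [sum_congr rfl fun s _ => hfiber s, sum_const, card_univ, card_univ, ZMod.card, ZMod.card,
    smul_eq_mul] at hsum
  have hpow : p ^ α = p * p ^ (α - 1) := by rw [← pow_succ', Nat.sub_add_cancel (by omega)]
  exact Nat.eq_of_mul_eq_mul_left hp.pos (hsum.symm.trans hpow)

theorem unitaryCayley_zmod_prime_pow_adj_iff {p α : ℕ} [NeZero (p ^ α)] (hp : p.Prime)
    (hα : α ≠ 0) (x y : ZMod (p ^ α)) :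
    (unitaryCayley (ZMod (p ^ α))).Adj x y ↔
      ZMod.castHom (dvd_pow_self p hα) (ZMod p) x ≠ ZMod.castHom (dvd_pow_self p hα) (ZMod p) y := by
  have hunit := ZMod.isUnit_iff_castHom_ne_zero hp hα (x - y)
  rw [map_sub, sub_ne_zero] at hunit
  exact ⟨fun hxy => hunit.1 hxy.2, fun hne => ⟨fun hxy => hne (congrArg _ hxy), hunit.2 hne⟩⟩

theorem sq_add_four_le_four_mul_pow_sub_pow_iff {p j : ℕ} (hp : 3 ≤ p) :
    (p ^ j) ^ 2 + 4 ≤ 4 * (p ^ (j + 1) - p ^ j) ↔ j ≤ 1 := by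
  obtain ⟨q, rfl⟩ := Nat.exists_eq_add_of_le' hp
  rw [pow_succ' (q + 3) j, show (q + 3) * (q + 3) ^ j = (q + 2) * (q + 3) ^ j + (q + 3) ^ j by ring,
    Nat.add_sub_cancel]
  constructor
  · intro h
    by_contra! hj
    have : (q + 3) ^ 2 ≤ (q + 3) ^ j := Nat.pow_le_pow_right (by omega) hj
    nlinarith
  · intro hj
    interval_cases j <;> nlinarith

/-- For an odd prime `p` and `α ≥ 1`, the unitary Cayley graph of `ℤ/p^α ℤ` is Ramanujan
iff `α = 1` or `α = 2`. -/
theorem stmt_12 (p α : ℕ) (hp : p.Prime) (hodd : p ≠ 2) (hα : 1 ≤ α) :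
    haveI : NeZero (p ^ α) := ⟨pow_ne_zero _ hp.pos.ne'⟩
    (IsRamanujan (unitaryCayley (ZMod (p ^ α))) ((p ^ α).totient) ↔ α = 1 ∨ α = 2) := by
  have : NeZero (p ^ α) := ⟨pow_ne_zero _ hp.pos.ne'⟩
  have : NeZero p := ⟨hp.ne_zero⟩
  have hα₀ : α ≠ 0 := by omega
  have hp₃ : 3 ≤ p := by
    have := hp.two_le
    omega
  have htot : (p ^ α).totient = Fintype.card (ZMod (p ^ α)) - p ^ (α - 1) := by
    rw [ZMod.card, Nat.totient_prime_pow hp (by omega), Nat.mul_sub_one, ← pow_succ,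
      Nat.sub_add_cancel hα]
  rw [htot, isRamanujan_iff_of_adj_iff (unitaryCayley_zmod_prime_pow_adj_iff hp hα₀)
    (ZMod.card_castHom_fiber hp hα₀) (pow_pos hp.pos _)
    (by rwa [ZMod.card])]
  simp only [ZMod.card]
  obtain ⟨j, rfl⟩ := Nat.exists_eq_add_of_le' hα
  rw [Nat.add_sub_cancel, sq_add_four_le_four_mul_pow_sub_pow_iff hp₃]
  omega
end
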